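/- Let A = ℂ[U,U⁻¹] (Laurent polynomials), t ∈ ℝ, t ∉ {-1,0,1}, and R the ideal of A generated by q = tU + U⁻¹ - (1+t). Then every element of ker(ε) (ε(Uᵐ)=1) is congruent modulo R·A ∩ ker ε to a scalar multiple of U - U⁻¹; i.e., dim_ℂ (ker ε / (qA ∩ ker ε)) = 1. -/

import Mathlib

open LaurentPolynomial

/-- The counit of `ℂ[U,U⁻¹]` (evaluation at `U = 1`), `ε(Uᵐ) = 1`. -/
noncomputable def eps : LaurentPolynomial ℂ →ₐ[ℂ] ℂ :=
  AddMonoidAlgebra.lift ℂ ℂ ℤ 1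

/-- The element `q = tU + U⁻¹ - (1+t)·1`. -/
noncomputable def qq (t : ℝ) : LaurentPolynomial ℂ :=
  (t : ℂ) • T 1 + T (-1) - (1 + (t : ℂ)) • 1

open Polynomial

noncomputable def ev (a : ℂˣ) : LaurentPolynomial ℂ →ₐ[ℂ] ℂ :=
  AddMonoidAlgebra.lift ℂ ℂ ℤ ((Units.coeHom ℂ).comp (zpowersHom ℂˣ a))

lemma ev_T (a : ℂˣ) (n : ℤ) : ev a (T n) = (a:ℂ)^n := by
  simp only [ev, T, AddMonoidAlgebra.lift_single, one_smul, MonoidHom.coe_comp,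
    Function.comp_apply, Units.coeHom_apply]
  simp [zpowersHom]

lemma ev_toLaurent (a : ℂˣ) (p : ℂ[X]) : ev a (toLaurent p) = p.eval (a:ℂ) := by
  have : (ev a).comp toLaurentAlg = Polynomial.aeval (a:ℂ) := by
    apply Polynomial.algHom_ext
    simp [toLaurentAlg_apply, Polynomial.toLaurent_X, ev_T]
  have h := DFunLike.congr_fun this p
  simpa [toLaurentAlg_apply, Polynomial.coe_aeval_eq_eval] using h

lemma eps_T (n : ℤ) : eps (T n) = 1 := by
  simp only [eps, T, AddMonoidAlgebra.lift_single, one_smul]; rfl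

lemma eps_toLaurent (p : ℂ[X]) : eps (toLaurent p) = p.eval 1 := by
  have : eps.comp toLaurentAlg = Polynomial.aeval (1:ℂ) := by
    apply Polynomial.algHom_ext
    simp [toLaurentAlg_apply, Polynomial.toLaurent_X, eps_T]
  have h := DFunLike.congr_fun this p
  simpa [toLaurentAlg_apply, Polynomial.coe_aeval_eq_eval] using h

lemma root_dvd (a : ℂ) (ha1 : a ≠ 1) (au : ℂˣ) (hau : (au:ℂ) = a) (f : LaurentPolynomial ℂ)
    (h1 : eps f = 0) (h2 : ev au f = 0) :
    ((T 1 - 1) * (T 1 - LaurentPolynomial.C a)) ∣ f := by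
  obtain ⟨n, p, hp⟩ := f.exists_T_pow
  have hp1 : p.eval 1 = 0 := by
    rw [← eps_toLaurent, hp, map_mul, h1, zero_mul]
  have hpa : p.eval a = 0 := by
    rw [← hau, ← ev_toLaurent, hp, map_mul, h2, zero_mul]
  obtain ⟨p₁, hq⟩ : (X - Polynomial.C 1) ∣ p := (dvd_iff_isRoot).2 hp1
  have hpa1 : p₁.eval a = 0 := by
    have := hpa
    rw [hq] at this
    simp only [eval_mul, eval_sub, eval_X, eval_C] at this
    rcases mul_eq_zero.1 this with h | h
    · exact absurd (sub_eq_zero.1 h) ha1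
    · exact h
  obtain ⟨p₂, hq2⟩ : (X - Polynomial.C a) ∣ p₁ := (dvd_iff_isRoot).2 hpa1
  have hd : ((X - Polynomial.C 1) * (X - Polynomial.C a)) ∣ p := ⟨p₂, by rw [hq, hq2]; ring⟩
  have hdvd := _root_.map_dvd Polynomial.toLaurent hd
  have key : Polynomial.toLaurent ((X - Polynomial.C 1) * (X - Polynomial.C a))
      = (T 1 - 1) * (T 1 - LaurentPolynomial.C a) := by
    simp
  rw [key, hp] at hdvd
  obtain ⟨g, hg⟩ := hdvd
  refine ⟨g * T (-n), ?_⟩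
  have hf : f = (f * T n) * T (-n) := by
    rw [mul_assoc, ← T_add]; simp
  rw [hf, hg]; ring

set_option maxRecDepth 8000 in
lemma qq_factor (t : ℝ) (ht0 : (t:ℂ) ≠ 0) :
    ((t : ℂ) • T 1 + T (-1) - (1 + (t : ℂ)) • 1 : LaurentPolynomial ℂ)
      = ((t:ℂ) • T (-1)) * ((T 1 - 1) * (T 1 - LaurentPolynomial.C ((t:ℂ)⁻¹))) := by
  have hT : (T (-1) : LaurentPolynomial ℂ) * T 1 = 1 := by
    rw [← T_add]; simp
  have hsa : LaurentPolynomial.C (t:ℂ) * LaurentPolynomial.C ((t:ℂ)⁻¹)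
      = (1 : LaurentPolynomial ℂ) := by
    rw [← map_mul, mul_inv_cancel₀ ht0, map_one]
  have hsmul : ∀ x : LaurentPolynomial ℂ, ∀ c : ℂ, c • x = LaurentPolynomial.C c * x := by
    intro x c
    rw [LaurentPolynomial.C_eq_algebraMap, Algebra.smul_def]
  rw [hsmul, hsmul, hsmul, map_add, map_one]
  linear_combination ((1:LaurentPolynomial ℂ) + LaurentPolynomial.C (t:ℂ)
      - LaurentPolynomial.C (t:ℂ) * T 1) * hT
    + (T (-1) * T 1 - T (-1)) * hsa

lemma ev_eps_span {t : ℝ} (ht0 : (t:ℂ) ≠ 0) (au : ℂˣ) (hau : (au:ℂ) = ((t:ℂ))⁻¹)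
    {y : LaurentPolynomial ℂ}
    (hy : y ∈ Ideal.span {((t : ℂ) • T 1 + T (-1) - (1 + (t : ℂ)) • 1 : LaurentPolynomial ℂ)}) :
    ev au y = 0 := by
  rw [Ideal.mem_span_singleton] at hy
  obtain ⟨g, hg⟩ := hy
  have hq : ev au ((t : ℂ) • T 1 + T (-1) - (1 + (t : ℂ)) • 1 : LaurentPolynomial ℂ) = 0 := by
    simp only [map_sub, map_add, map_smul, ev_T, map_one, smul_eq_mul, mul_one]
    rw [hau]
    rw [zpow_one, zpow_neg_one, inv_inv]
    field_simp
    simp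
  rw [hg, map_mul, hq, zero_mul]

theorem stmt13_aux (t : ℝ) (ht : t ≠ -1 ∧ t ≠ 0 ∧ t ≠ 1) :
    ∀ x : LaurentPolynomial ℂ, eps x = 0 →
      ∃! c : ℂ, x - c • (T 1 - T (-1)) ∈ Ideal.span
        {((t : ℂ) • T 1 + T (-1) - (1 + (t : ℂ)) • 1 : LaurentPolynomial ℂ)} := by
  obtain ⟨htm1, ht0, ht1⟩ := ht
  have ht0' : (t:ℂ) ≠ 0 := by exact_mod_cast ht0
  set a : ℂ := ((t:ℂ))⁻¹ with ha
  have ha0 : a ≠ 0 := inv_ne_zero ht0'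
  have ha1 : a ≠ 1 := by
    intro h
    apply ht1
    have : (t:ℂ) = 1 := by
      rw [ha, inv_eq_one] at h
      exact_mod_cast h
    exact_mod_cast this
  set au : ℂˣ := Units.mk0 a ha0 with hau
  have haucoe : (au : ℂ) = a := rfl
  intro x hx
  -- the value d = a - a⁻¹ ≠ 0
  have hd0 : a - a⁻¹ ≠ 0 := by
    rw [ha, inv_inv]
    intro h
    have h2 : (t:ℂ) * (t:ℂ) = 1 := by
      have := sub_eq_zero.1 h
      field_simp at this
      linear_combination this.symm
    have h3 : t * t = 1 := by exact_mod_cast h2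
    rcases mul_self_eq_one_iff.1 h3 with h | h
    · exact ht1 h
    · exact htm1 h
  have hdval : ev au (T 1 - T (-1)) = a - a⁻¹ := by
    rw [map_sub, ev_T, ev_T, haucoe, zpow_one, zpow_neg_one]
  -- span equality
  have hspan : Ideal.span {((t : ℂ) • T 1 + T (-1) - (1 + (t : ℂ)) • 1 : LaurentPolynomial ℂ)}
      = Ideal.span {((T 1 - 1) * (T 1 - LaurentPolynomial.C a) : LaurentPolynomial ℂ)} := by
    rw [qq_factor t ht0']
    have hu : IsUnit ((t:ℂ) • T (-1) : LaurentPolynomial ℂ) := by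
      have he : ((t:ℂ) • T (-1) : LaurentPolynomial ℂ)
          = LaurentPolynomial.C (t:ℂ) * T (-1) := by
        rw [LaurentPolynomial.C_eq_algebraMap, Algebra.smul_def]
      rw [he]
      exact ((isUnit_iff_ne_zero.2 ht0').map LaurentPolynomial.C).mul (isUnit_T (-1))
    exact Ideal.span_singleton_mul_left_unit hu _
  refine ⟨ev au x / (a - a⁻¹), ?_, ?_⟩
  · -- existence
    set c := ev au x / (a - a⁻¹) with hc
    show x - c • (T 1 - T (-1)) ∈ _
    rw [hspan, Ideal.mem_span_singleton]
    apply root_dvd a ha1 au haucoe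
    · rw [map_sub, hx, map_smul, map_sub, eps_T, eps_T]
      simp
    · rw [map_sub, map_smul, hdval, smul_eq_mul, hc,
        div_mul_cancel₀ _ hd0, sub_self]
  · -- uniqueness
    intro c' hc'
    have h0 : ev au (x - c' • (T 1 - T (-1))) = 0 := ev_eps_span ht0' au haucoe hc'
    rw [map_sub, map_smul, hdval, smul_eq_mul, sub_eq_zero] at h0
    rw [h0, mul_div_assoc, div_self hd0, mul_one]

/-- For `t ∉ {-1,0,1}`, every element of `ker ε` is congruent modulo the ideal
generated by `q = tU + U⁻¹ - (1+t)` to a unique scalar multiple of `U - U⁻¹`: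
the quotient `ker ε / (qA ∩ ker ε)` is one-dimensional. -/
theorem stmt13 (t : ℝ) (ht : t ≠ -1 ∧ t ≠ 0 ∧ t ≠ 1) :
    ∀ x : LaurentPolynomial ℂ, eps x = 0 →
      ∃! c : ℂ, x - c • (T 1 - T (-1)) ∈ Ideal.span {qq t} := by
  simp only [qq]
  exact stmt13_aux t ht
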